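/- Progressive construction of the sparse interpolation operator: let Λ_n = {ν_1, …, ν_n} be a totally ordered chain of multi-indices ν_1 < ν_2 < ⋯ < ν_n (componentwise strict order), with grid points z_{ν_k} and data values f_{ν_k}. Define recursively I_{Λ_0} = 0 and I_{Λ_k} = I_{Λ_{k−1}} + α_{ν_k} H_{ν_k}, where α_{ν_k} = f_{ν_k} − I_{Λ_{k−1}}(z_{ν_k}) and H_ν are the multivariate hierarchical basis functions. Then I_{Λ_n}(z_{ν_k}) = f_{ν_k} for all 1 ≤ k ≤ n, i.e. I_{Λ_n} interpolates the data. -/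
import Mathlib


/-- Progressive construction of the sparse interpolation operator: given a strictly
increasing chain ν 0 < ν 1 < ⋯ < ν (n−1) of multi-indices (componentwise order),
grid points z_ν = (β_{ν_j})_j, hierarchical basis functions H satisfying
H (ν k) (z_{ν k}) = 1 and H (ν k) (z_{ν m}) = 0 for m < k, data f, and the recursion
I 0 = 0, I (k+1) = I k + (f k − I k (z_{ν k}))·H (ν k), the result I n interpolates:
I n (z_{ν k}) = f k for all k < n. -/
theorem progressive_interpolation (n : ℕ) (ν : Fin n → (ℕ →₀ ℕ))
    (hchain : StrictMono ν) (β : ℕ → ℝ)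
    (H : (ℕ →₀ ℕ) → (ℕ → ℝ) → ℝ)
    (hH1 : ∀ k : Fin n, H (ν k) (fun j => β (ν k j)) = 1)
    (hH0 : ∀ k m : Fin n, m < k → H (ν k) (fun j => β (ν m j)) = 0)
    (f : Fin n → ℝ)
    (I : ℕ → (ℕ → ℝ) → ℝ)
    (hI0 : ∀ z, I 0 z = 0)
    (hIrec : ∀ (k : Fin n) (z : ℕ → ℝ),
      I (k + 1) z = I k z + (f k - I k (fun j => β (ν k j))) * H (ν k) z) :
    ∀ k : Fin n, I n (fun j => β (ν k j)) = f k := by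
  have key : ∀ t : ℕ, t ≤ n → ∀ k : Fin n, (k : ℕ) < t →
      I t (fun j => β (ν k j)) = f k := by
    intro t
    induction t with
    | zero => intro _ k hk; omega
    | succ t ih =>
      intro ht k hk
      have htn : t < n := lt_of_lt_of_le (Nat.lt_succ_self t) ht
      have hr := hIrec ⟨t, htn⟩ (fun j => β (ν k j))
      simp only [Fin.val_mk] at hr  -- I (t+1) ... = ...
      rcases lt_or_eq_of_le (Nat.lt_succ_iff.mp hk) with hlt | heq
      · have h0 : H (ν ⟨t, htn⟩) (fun j => β (ν k j)) = 0 := hH0 ⟨t, htn⟩ k hlt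
        rw [hr, h0, ih (le_of_lt ht) k hlt]
        ring
      · have hkeq : k = ⟨t, htn⟩ := Fin.ext heq
        subst hkeq
        rw [hr, hH1 ⟨t, htn⟩]
        ring
  intro k
  exact key n le_rfl k k.isLt
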